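/- In the field of rational functions $\mathbb{Q}(\alpha_{-1},\alpha_0,\alpha_1,f_{-1},f_0,f_1)$, for $\lambda = (2,2)$ with Frobenius symbol $(\{2,1\},\{1,0\})$ the normalized hook function satisfies the $2\times 2$ Giambelli determinant identity $a_{34} = \det\begin{pmatrix} \tilde\phi_{2,1} & \tilde\phi_{2,0} \\ \tilde\phi_{1,1} & \tilde\phi_{1,0} \end{pmatrix}$, that is, $a_{34} = \tilde\phi_{2,1}\tilde\phi_{1,0} - \tilde\phi_{2,0}\tilde\phi_{1,1}$, where $\tilde\phi_{1,0} = f_0/\alpha_0$, $\tilde\phi_{2,0} = (f_0 f_1 - \alpha_1)/((\alpha_0+\alpha_1)\alpha_1)$, $\tilde\phi_{1,1} = (f_{-1}f_0+\alpha_{-1})/((\alpha_{-1}+\alpha_0)\alpha_{-1})$, $\tilde\phi_{2,1} = (f_{-1}f_0f_1+\alpha_{-1}f_1-\alpha_1 f_{-1})/((\alpha_{-1}+\alpha_0+\alpha_1)\alpha_{-1}\alpha_1)$, and $a_{34} = (f_{-1}f_0^2f_1+\alpha_{-1}f_0f_1-\alpha_1 f_{-1}f_0+\alpha_0(\alpha_{-1}+\alpha_0+\alpha_1))/((\alpha_{-1}+\alpha_0+\alpha_1)(\alpha_0+\alpha_1)(\alpha_{-1}+\alpha_0)\alpha_0)$.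 -/
import Mathlib


open MvPolynomial

/-- The field `ℚ(α₋₁,α₀,α₁,f₋₁,f₀,f₁)`; `X 0, X 1, X 2` are `α₋₁, α₀, α₁` and
`X 3, X 4, X 5` are `f₋₁, f₀, f₁`. -/
noncomputable abbrev K6 : Type := FractionRing (MvPolynomial (Fin 6) ℚ)

noncomputable abbrev kv (i : Fin 6) : K6 := algebraMap (MvPolynomial (Fin 6) ℚ) K6 (X i)

noncomputable abbrev am1 : K6 := kv 0
noncomputable abbrev a0 : K6 := kv 1
noncomputable abbrev a1 : K6 := kv 2
noncomputable abbrev fm1 : K6 := kv 3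
noncomputable abbrev f0 : K6 := kv 4
noncomputable abbrev f1 : K6 := kv 5

noncomputable abbrev phi10 : K6 := f0 / a0
noncomputable abbrev phi20 : K6 := (f0 * f1 - a1) / ((a0 + a1) * a1)
noncomputable abbrev phi11 : K6 := (fm1 * f0 + am1) / ((am1 + a0) * am1)
noncomputable abbrev phi21 : K6 :=
  (fm1 * f0 * f1 + am1 * f1 - a1 * fm1) / ((am1 + a0 + a1) * am1 * a1)
noncomputable abbrev a34 : K6 :=
  (fm1 * f0 ^ 2 * f1 + am1 * f0 * f1 - a1 * fm1 * f0 + a0 * (am1 + a0 + a1)) /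
    ((am1 + a0 + a1) * (a0 + a1) * (am1 + a0) * a0)

lemma kv_ne (i : Fin 6) : kv i ≠ 0 := by
  simp [kv, IsFractionRing.to_map_eq_zero_iff, X_ne_zero]

lemma kv_add_ne (i j : Fin 6) (h : i ≠ j) : kv i + kv j ≠ 0 := by
  rw [kv, kv, ← map_add]
  intro hc
  rw [IsFractionRing.to_map_eq_zero_iff] at hc
  have := congrArg (fun p => MvPolynomial.coeff (Finsupp.single i 1) p) hc
  simp [coeff_X', Finsupp.single_eq_single_iff, h.symm] at this

lemma kv_add3_ne (i j k : Fin 6) (h1 : i ≠ j) (h2 : i ≠ k) (h3 : j ≠ k) :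
    kv i + kv j + kv k ≠ 0 := by
  rw [kv, kv, kv, ← map_add, ← map_add]
  intro hc
  rw [IsFractionRing.to_map_eq_zero_iff] at hc
  have := congrArg (fun p => MvPolynomial.coeff (Finsupp.single i 1) p) hc
  simp [coeff_X', Finsupp.single_eq_single_iff, h1.symm, h2.symm] at this

set_option maxHeartbeats 1000000 in
/-- The smallest nontrivial instance of Theorem 1 (the Giambelli-type determinant formula):
for `λ = (2,2)` with Frobenius symbol `({2,1},{1,0})`, the normalized τ-function satisfies
`a₃₄ = det [φ̃₂₁ φ̃₂₀; φ̃₁₁ φ̃₁₀] = φ̃₂₁ φ̃₁₀ - φ̃₂₀ φ̃₁₁` in `ℚ(α₋₁,α₀,α₁,f₋₁,f₀,f₁)`. -/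
theorem stmt_17 : a34 = phi21 * phi10 - phi20 * phi11 := by
  have h0 : am1 ≠ 0 := kv_ne 0
  have h1 : a0 ≠ 0 := kv_ne 1
  have h2 : a1 ≠ 0 := kv_ne 2
  have h01 : am1 + a0 ≠ 0 := kv_add_ne 0 1 (by decide)
  have h12 : a0 + a1 ≠ 0 := kv_add_ne 1 2 (by decide)
  have h012 : am1 + a0 + a1 ≠ 0 := kv_add3_ne 0 1 2 (by decide) (by decide) (by decide)
  have hA : (am1 + a0 + a1) * am1 * a1 * a0 ≠ 0 :=
    mul_ne_zero (mul_ne_zero (mul_ne_zero h012 h0) h2) h1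
  have hB : (a0 + a1) * a1 * ((am1 + a0) * am1) ≠ 0 :=
    mul_ne_zero (mul_ne_zero h12 h2) (mul_ne_zero h01 h0)
  have hC : (am1 + a0 + a1) * (a0 + a1) * (am1 + a0) * a0 ≠ 0 :=
    mul_ne_zero (mul_ne_zero (mul_ne_zero h012 h12) h01) h1
  rw [phi21, phi10, phi20, phi11, a34, div_mul_div_comm, div_mul_div_comm,
    div_sub_div _ _ hA hB, div_eq_div_iff hC (mul_ne_zero hA hB)]
  ring
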